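/- arXiv:math/0605320 — 2 statements merged into one kernel-verified Lean document; each statement's English description precedes it below -/
import Mathlib

section
/- For every natural numbers n and i, the quantity (4^n(2i+1)/((n+i+1)(2n+2i+1))) * C(2i, i) * C(3n+2i, n) is a positive integer. -/
open Finset

lemma kreweras_cover {q r n i : ℕ} (hq : 2 ≤ q) (hr1 : 1 ≤ r)
    (hdvd : q ^ r ∣ n + i + 1)
    (hP : ¬ q ^ r ≤ n % q ^ r + (2 * (n + i)) % q ^ r)
    (hQ2 : ¬ q ^ r ≤ i % q ^ r + i % q ^ r) :
    r = 1 ∧ q ∣ 4 ^ n * (2 * i + 1) := by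
  have hQge : q ≤ q ^ r := Nat.le_self_pow (by omega) q
  obtain ⟨c, hc⟩ := hdvd
  have hcpos : 1 ≤ c := by
    rcases Nat.eq_zero_or_pos c with h | h
    · subst h; simp at hc
    · exact h
  -- s % Q = Q - 1
  have hs : (n + i) % q ^ r = q ^ r - 1 := by
    have h1 : n + i = q ^ r * (c - 1) + (q ^ r - 1) := by
      set X := q ^ r * c
      set Y := q ^ r * (c - 1)
      have h2 : X = Y + q ^ r := by
        simp only [X, Y]
        cases c with
        | zero => omega
        | succ k => simp [Nat.mul_succ]
      omega
    rw [h1, Nat.mul_add_mod, Nat.mod_eq_of_lt (by omega)]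
  -- 2s % Q = Q - 2
  have h2s : (2 * (n + i)) % q ^ r = q ^ r - 2 := by
    rcases Nat.lt_or_ge (q ^ r) 3 with h3 | h3
    · -- q^r = 2
      have hQ2' : q ^ r = 2 := by omega
      rw [hQ2']
      omega
    · rw [Nat.mul_mod, hs, Nat.mod_eq_of_lt (show 2 < q ^ r by omega),
        show 2 * (q ^ r - 1) = q ^ r + (q ^ r - 2) by omega,
        Nat.add_mod_left, Nat.mod_eq_of_lt (by omega)]
  have htlt : n % q ^ r < q ^ r := Nat.mod_lt n (by omega)
  have hult : i % q ^ r < q ^ r := Nat.mod_lt i (by omega)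
  have ht1 : n % q ^ r ≤ 1 := by omega
  -- i % Q = Q - 1 - n % Q
  have hu : i % q ^ r = q ^ r - 1 - n % q ^ r := by
    have hadd : (i % q ^ r + n % q ^ r) % q ^ r = q ^ r - 1 := by
      rw [← Nat.add_mod, add_comm i n, hs]
    rcases Nat.lt_or_ge (i % q ^ r + n % q ^ r) (q ^ r) with h | h
    · rw [Nat.mod_eq_of_lt h] at hadd; omega
    · rw [Nat.mod_eq_sub_mod h, Nat.mod_eq_of_lt (by omega)] at hadd
      omega
  -- q^r ≤ 3, r = 1
  have hQ3 : q ^ r ≤ 3 := by omega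
  have hr : r = 1 := by
    by_contra h
    have h2 : 2 ≤ r := by omega
    have : q ^ 2 ≤ q ^ r := Nat.pow_le_pow_right (by omega) h2
    have : 2 * 2 ≤ q ^ 2 := by
      rw [pow_two]; exact Nat.mul_le_mul hq hq
    omega
  subst hr
  rw [pow_one] at hs h2s ht1 hu htlt hult hQ3 hc
  refine ⟨rfl, ?_⟩
  rcases Nat.lt_or_ge q 3 with h3 | h3
  · -- q = 2 : n is odd, so 2 ∣ 4^n
    have hq2 : q = 2 := by omega
    subst hq2
    have hn1 : n % 2 = 1 := by omega
    exact Dvd.dvd.mul_right (dvd_trans (by norm_num) (dvd_pow_self 4 (by omega : n ≠ 0))) _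
  · -- q = 3 : 3 ∣ 2i+1
    have hq3 : q = 3 := by omega
    subst hq3
    have : i % 3 = 1 := by omega
    exact Dvd.dvd.mul_left (by omega) _

lemma kreweras_pow_dvd (q n i e : ℕ) (hq : Nat.Prime q) (hdvd : q ^ e ∣ n + i + 1) :
    q ^ e ∣ 4 ^ n * (2 * i + 1) * Nat.choose (2 * i) i * Nat.choose (3 * n + 2 * i) n := by
  classical
  set b := Nat.log q (3 * n + 2 * i) + e + 1 with hb
  set PA : ℕ → Prop := fun r => q ^ r ≤ n % q ^ r + (3 * n + 2 * i - n) % q ^ r with hPA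
  set PB : ℕ → Prop := fun r => q ^ r ≤ i % q ^ r + (2 * i - i) % q ^ r with hPB
  set T : Finset ℕ := Finset.Ico 1 (e + 1) with hT
  set SA := T.filter PA with hSA
  set T' := T.filter (fun r => ¬ PA r) with hT'
  set SB := T'.filter PB with hSB
  set SC := T'.filter (fun r => ¬ PB r) with hSC
  have hcardT : T.card = e := by simp [hT]
  have hsplit1 : SA.card + T'.card = e := by
    rw [hSA, hT', ← hcardT]; exact Finset.card_filter_add_card_filter_not _
  have hsplit2 : SB.card + SC.card = T'.card := by
    rw [hSB, hSC]; exact Finset.card_filter_add_card_filter_not _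
  -- dvd from SA
  have hlogA : Nat.log q (3 * n + 2 * i) < b := by omega
  have hemA := hq.emultiplicity_choose (show n ≤ 3 * n + 2 * i by omega) hlogA
  have hsubA : SA ⊆ (Finset.Ico 1 b).filter PA := by
    intro x hx
    rw [hSA, Finset.mem_filter] at hx
    rw [Finset.mem_filter]
    refine ⟨?_, hx.2⟩
    rw [hT, Finset.mem_Ico] at hx
    rw [Finset.mem_Ico]
    omega
  have hdA : q ^ SA.card ∣ Nat.choose (3 * n + 2 * i) n := by
    refine pow_dvd_iff_le_emultiplicity.mpr ?_
    rw [hemA]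
    exact_mod_cast Nat.cast_le.mpr (Finset.card_le_card hsubA)
  -- dvd from SB
  have hlogB : Nat.log q (2 * i) < b := by
    have := Nat.log_mono_right (show 2 * i ≤ 3 * n + 2 * i by omega) (b := q)
    omega
  have hemB := hq.emultiplicity_choose (show i ≤ 2 * i by omega) hlogB
  have hsubB : SB ⊆ (Finset.Ico 1 b).filter PB := by
    intro x hx
    rw [hSB, Finset.mem_filter] at hx
    rw [hT', Finset.mem_filter] at hx
    rw [Finset.mem_filter]
    refine ⟨?_, hx.2⟩
    have := hx.1.1
    rw [hT, Finset.mem_Ico] at this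
    rw [Finset.mem_Ico]
    omega
  have hdB : q ^ SB.card ∣ Nat.choose (2 * i) i := by
    refine pow_dvd_iff_le_emultiplicity.mpr ?_
    rw [hemB]
    exact_mod_cast Nat.cast_le.mpr (Finset.card_le_card hsubB)
  -- SC
  have hcover : ∀ r ∈ SC, r = 1 ∧ q ∣ 4 ^ n * (2 * i + 1) := by
    intro r hr
    rw [hSC, Finset.mem_filter] at hr
    obtain ⟨hr', hnPB⟩ := hr
    rw [hT', Finset.mem_filter] at hr'
    obtain ⟨hrT, hnPA⟩ := hr'
    rw [hT, Finset.mem_Ico] at hrT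
    have hdvd' : q ^ r ∣ n + i + 1 :=
      (pow_dvd_pow q (show r ≤ e by omega)).trans hdvd
    have hPA' : ¬ q ^ r ≤ n % q ^ r + (2 * (n + i)) % q ^ r := by
      have : 3 * n + 2 * i - n = 2 * (n + i) := by omega
      rw [hPA] at hnPA; rw [this] at hnPA; exact hnPA
    have hPB' : ¬ q ^ r ≤ i % q ^ r + i % q ^ r := by
      have : 2 * i - i = i := by omega
      rw [hPB] at hnPB; rw [this] at hnPB; exact hnPB
    exact kreweras_cover hq.two_le (by omega) hdvd' hPA' hPB'
  have hdC : q ^ SC.card ∣ 4 ^ n * (2 * i + 1) := by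
    rcases Finset.eq_empty_or_nonempty SC with h | h
    · rw [h]; simp
    · obtain ⟨r, hr⟩ := h
      have h1 := hcover r hr
      have hsub : SC ⊆ {1} := by
        intro x hx
        rw [Finset.mem_singleton]
        exact (hcover x hx).1
      have hc1 : SC.card ≤ 1 := by
        calc SC.card ≤ ({1} : Finset ℕ).card := Finset.card_le_card hsub
        _ = 1 := Finset.card_singleton 1
      calc q ^ SC.card ∣ q ^ 1 := pow_dvd_pow q hc1
      _ = q := pow_one q
      _ ∣ 4 ^ n * (2 * i + 1) := h1.2
  -- combine
  have hkey : q ^ e = q ^ SA.card * q ^ SB.card * q ^ SC.card := by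
    rw [← pow_add, ← pow_add]
    congr 1
    omega
  rw [hkey]
  have : 4 ^ n * (2 * i + 1) * Nat.choose (2 * i) i * Nat.choose (3 * n + 2 * i) n
      = Nat.choose (3 * n + 2 * i) n * Nat.choose (2 * i) i * (4 ^ n * (2 * i + 1)) := by ring
  rw [this]
  exact mul_dvd_mul (mul_dvd_mul hdA hdB) hdC

lemma kreweras_m_dvd (n i : ℕ) :
    (2 * n + 2 * i + 1) ∣ (2 * i + 1) * Nat.choose (3 * n + 2 * i) n := by
  cases n with
  | zero => simp
  | succ k =>
    have key : Nat.choose (3 * (k+1) + 2 * i) (k + 1) * (k + 1)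
        = Nat.choose (3 * (k+1) + 2 * i) k * (3 * (k+1) + 2 * i - k) :=
      Nat.choose_succ_right_eq _ k
    have hsub : 3 * (k+1) + 2 * i - k = 2 * (k+1) + 2 * i + 1 := by omega
    rw [hsub] at key
    rw [← Int.natCast_dvd_natCast]
    have keyZ : (Nat.choose (3 * (k+1) + 2 * i) (k + 1) : ℤ) * (k + 1)
        = (Nat.choose (3 * (k+1) + 2 * i) k : ℤ) * (2 * (k+1) + 2 * i + 1) := by
      exact_mod_cast key
    refine ⟨(Nat.choose (3 * (k+1) + 2 * i) (k+1) : ℤ) - 2 * Nat.choose (3 * (k+1) + 2 * i) k, ?_⟩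
    push_cast
    linear_combination (-2 : ℤ) * keyZ

theorem kreweras_ni_number_is_pos_integer (n i : ℕ) :
    ((n + i + 1) * (2 * n + 2 * i + 1)) ∣
        4 ^ n * (2 * i + 1) * Nat.choose (2 * i) i * Nat.choose (3 * n + 2 * i) n ∧
      0 < 4 ^ n * (2 * i + 1) * Nat.choose (2 * i) i * Nat.choose (3 * n + 2 * i) n /
          ((n + i + 1) * (2 * n + 2 * i + 1)) := by
  have hFpos : 0 < 4 ^ n * (2 * i + 1) * Nat.choose (2 * i) i * Nat.choose (3 * n + 2 * i) n := by
    have h1 : 0 < Nat.choose (2 * i) i := Nat.choose_pos (by omega)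
    have h2 : 0 < Nat.choose (3 * n + 2 * i) n := Nat.choose_pos (by omega)
    have h3 : 0 < 4 ^ n := Nat.pow_pos (by omega)
    exact Nat.mul_pos (Nat.mul_pos (Nat.mul_pos h3 (by omega)) h1) h2
  have hm : (2 * n + 2 * i + 1) ∣
      4 ^ n * (2 * i + 1) * Nat.choose (2 * i) i * Nat.choose (3 * n + 2 * i) n := by
    have h := kreweras_m_dvd n i
    have heq : 4 ^ n * (2 * i + 1) * Nat.choose (2 * i) i * Nat.choose (3 * n + 2 * i) n
        = (4 ^ n * Nat.choose (2 * i) i) * ((2 * i + 1) * Nat.choose (3 * n + 2 * i) n) := by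
      ring
    rw [heq]
    exact Dvd.dvd.mul_left h _
  have hp : (n + i + 1) ∣
      4 ^ n * (2 * i + 1) * Nat.choose (2 * i) i * Nat.choose (3 * n + 2 * i) n := by
    rw [Nat.dvd_iff_prime_pow_dvd_dvd]
    intro q k hq hqk
    exact kreweras_pow_dvd q n i k hq hqk
  have hcop : Nat.Coprime (n + i + 1) (2 * n + 2 * i + 1) := by
    have h1 : Nat.gcd (n + i + 1) (2 * n + 2 * i + 1) ∣ 2 * (n + i + 1) - (2 * n + 2 * i + 1) :=
      Nat.dvd_sub ((Nat.gcd_dvd_left _ _).mul_left 2) (Nat.gcd_dvd_right _ _)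
    have h2 : 2 * (n + i + 1) - (2 * n + 2 * i + 1) = 1 := by omega
    rw [h2] at h1
    exact Nat.dvd_one.mp h1
  have hdvd : ((n + i + 1) * (2 * n + 2 * i + 1)) ∣
      4 ^ n * (2 * i + 1) * Nat.choose (2 * i) i * Nat.choose (3 * n + 2 * i) n :=
    hcop.mul_dvd_of_dvd_of_dvd hp hm
  exact ⟨hdvd, Nat.div_pos (Nat.le_of_dvd hFpos hdvd) (Nat.mul_pos (by omega) (by omega))⟩
end

section
/- Let G be a connected graph with a distinguished vertex v₀ whose deletion does not disconnect the graph, and let T be a spanning tree of G rooted at v₀ such that every edge of G not in T joins two comparable vertices (one is an ancestor of the other in T). Then exactly one edge of T is incident to v₀. -/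
/-- In a tree `T` rooted at `v₀`, the vertex `u` is an ancestor of `w` if `u` lies
on every `T`-walk from `v₀` to `w` (in particular on the unique `T`-path). -/
def Ancestor {V : Type*} (T : SimpleGraph V) (v₀ u w : V) : Prop :=
  ∀ p : T.Walk v₀ w, u ∈ p.support

/-!
Every vertex other than `v₀` hangs below some tree-neighbour of `v₀`, and the depth condition
says that each edge of `G - v₀` joins two vertices of one such branch (a tree edge, or an ancestor
and a descendant). Since `G - v₀` is connected, all its vertices, in particular all tree-neighbours
of `v₀`, lie in a single branch, so they are joined by tree walks avoiding `v₀`. Two distinct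
tree-neighbours joined that way would close a cycle through `v₀`; hence `v₀` has exactly one.
-/

namespace SimpleGraph

variable {V : Type*} {G T : SimpleGraph V} {v u w x : V}

def ReachableAvoiding (T : SimpleGraph V) (v u w : V) : Prop :=
  ∃ p : T.Walk u w, v ∉ p.support

lemma ReachableAvoiding.trans (huw : T.ReachableAvoiding v u w)
    (hwx : T.ReachableAvoiding v w x) : T.ReachableAvoiding v u x := by
  obtain ⟨p, hp⟩ := huw
  obtain ⟨q, hq⟩ := hwx
  exact ⟨p.append q, by simp [Walk.mem_support_append_iff, hp, hq]⟩

lemma ReachableAvoiding.symm (h : T.ReachableAvoiding v u w) : T.ReachableAvoiding v w u := by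
  obtain ⟨p, hp⟩ := h
  exact ⟨p.reverse, by simpa using hp⟩

lemma reachableAvoiding_of_adj (hadj : T.Adj u w) (hu : u ≠ v) (hw : w ≠ v) :
    T.ReachableAvoiding v u w :=
  ⟨.cons hadj .nil, by simp [hu.symm, hw.symm]⟩

lemma reachableAvoiding_of_ancestor (hw : T.Reachable v w) (hu : u ≠ v) (h : Ancestor T v u w) :
    T.ReachableAvoiding v u w := by
  classical
  obtain ⟨p, hp⟩ := hw.exists_isPath
  cases p with
  | nil => exact absurd (by simpa using h .nil) hu
  | cons hadj q =>
    have huq : u ∈ q.support := by simpa [hu] using h (.cons hadj q)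
    have hvq : v ∉ q.support := (Walk.cons_isPath_iff _ _).mp hp |>.2
    exact ⟨q.dropUntil u huq, fun hv => hvq (q.support_dropUntil_subset_support huq hv)⟩

lemma reachableAvoiding_of_adj_of_comparable (hT : T.Preconnected)
    (hdepth : ∀ u w, G.Adj u w → ¬ T.Adj u w → Ancestor T v u w ∨ Ancestor T v w u)
    (hu : u ≠ v) (hw : w ≠ v) (huw : G.Adj u w) : T.ReachableAvoiding v u w := by
  by_cases hT_uw : T.Adj u w
  · exact reachableAvoiding_of_adj hT_uw hu hw
  rcases hdepth u w huw hT_uw with h | h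
  · exact reachableAvoiding_of_ancestor (hT v w) hu h
  · exact (reachableAvoiding_of_ancestor (hT v u) hw h).symm

lemma IsAcyclic.eq_of_reachableAvoiding (hT : T.IsAcyclic) (hu : T.Adj v u) (hw : T.Adj v w)
    (h : T.ReachableAvoiding v u w) : u = w := by
  classical
  obtain ⟨p, hp⟩ := h
  have hpath : (Walk.cons hu p.bypass).IsPath :=
    p.bypass_isPath.cons fun hv => hp (p.support_bypass_subset_support hv)
  simpa using (hT.eq_snd_of_adj_start hpath hw (by simp)).symm

lemma reachableAvoiding_of_reachable_deleteVerts
    (hadj : ∀ u w, u ≠ v → w ≠ v → G.Adj u w → T.ReachableAvoiding v u w)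
    {x y : ((⊤ : G.Subgraph).deleteVerts {v}).verts}
    (hxy : ((⊤ : G.Subgraph).deleteVerts {v}).coe.Reachable x y) :
    T.ReachableAvoiding v x y := by
  obtain ⟨q⟩ := hxy
  induction q with
  | @nil x => exact ⟨.nil, by simpa [eq_comm] using x.2.2⟩
  | @cons x y z h _ ih =>
    have hxv : (x : V) ≠ v := by simpa using x.2.2
    have hyv : (y : V) ≠ v := by simpa using y.2.2
    exact (hadj x y hxv hyv (Subgraph.coe_adj_sub _ _ _ h)).trans ih

lemma existsUnique_mem_edgeSet_of_existsUnique_adj (h : ∃! u, T.Adj v u) :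
    ∃! e : Sym2 V, e ∈ T.edgeSet ∧ v ∈ e := by
  obtain ⟨u, hu, huniq⟩ := h
  refine ⟨s(v, u), ⟨hu, Sym2.mem_mk_left v u⟩, ?_⟩
  rintro e ⟨he, hve⟩
  obtain ⟨w, rfl⟩ := Sym2.mem_iff_exists.mp hve
  rw [huniq w he]

end SimpleGraph

open SimpleGraph

theorem depth_tree_unique_root_edge_general {V : Type*} [Fintype V]
    (G T : SimpleGraph V) (v₀ : V)
    (hcard : 2 ≤ Fintype.card V)
    (hdel : ((⊤ : G.Subgraph).deleteVerts {v₀}).coe.Connected)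
    (hTconn : T.Connected) (hTacyc : T.IsAcyclic)
    (hdepth : ∀ u w : V, G.Adj u w → ¬ T.Adj u w →
      Ancestor T v₀ u w ∨ Ancestor T v₀ w u) :
    ∃! e : Sym2 V, e ∈ T.edgeSet ∧ v₀ ∈ e := by
  have : Nontrivial V := Fintype.one_lt_card_iff_nontrivial.mp hcard
  have hneighbours : ∀ u w, T.Adj v₀ u → T.Adj v₀ w → u = w := by
    intro u w hu hw
    refine hTacyc.eq_of_reachableAvoiding hu hw <|
      reachableAvoiding_of_reachable_deleteVerts (x := ⟨u, ?_⟩) (y := ⟨w, ?_⟩)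
        (fun _ _ => reachableAvoiding_of_adj_of_comparable hTconn.preconnected hdepth)
        (hdel _ _)
    · simpa using hu.ne'
    · simpa using hw.ne'
  obtain ⟨u, hu⟩ := hTconn.preconnected.exists_adj_of_nontrivial v₀
  exact existsUnique_mem_edgeSet_of_existsUnique_adj ⟨u, hu, fun w hw => hneighbours w u hw hu⟩

theorem depth_tree_unique_root_edge {V : Type*} [Fintype V]
    (G T : SimpleGraph V) (v₀ : V)
    (hcard : 2 ≤ Fintype.card V)
    (hG : G.Connected)
    (hdel : ((⊤ : G.Subgraph).deleteVerts {v₀}).coe.Connected)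
    (hsub : T ≤ G) (hTconn : T.Connected) (hTacyc : T.IsAcyclic)
    (hdepth : ∀ u w : V, G.Adj u w → ¬ T.Adj u w →
      Ancestor T v₀ u w ∨ Ancestor T v₀ w u) :
    ∃! e : Sym2 V, e ∈ T.edgeSet ∧ v₀ ∈ e :=
  depth_tree_unique_root_edge_general G T v₀ hcard hdel hTconn hTacyc hdepth
end
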